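/- arXiv:1709.02118 — 3 statements merged into one kernel-verified Lean document; each statement's English description precedes it below -/
import Mathlib

section
/- Let U be an open ball in ℝ³. Then for any two points x, y in the complement of the closure of U, there exists a rectifiable path γ from x to y lying entirely in ℝ³ \ closure(U) whose length is at most √2 · √((π/4)² + 1) · |x − y|. -/
/-!
Put `a = |x - ξ| ≤ b = |y - ξ|` and let `θ` be the angle `x ξ y`. Go from `x` along the great
circle of radius `a` in the plane of `ξ, x, y` to the point at distance `a` on the ray `ξ y`, then
radially out to `y`. This path stays outside the open ball of radius `a` and has length
`aθ + (b - a)`, while the law of cosines gives `|x - y|² = (b - a)² + 4ab sin²(θ/2)`. The bounds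
`sin (θ/2) ≥ 3θ/8` for `θ ≤ 1` (Taylor) and `sin (θ/2) ≥ 5θ/16` on `[0, π]` (Jordan) give
`(aθ + b - a)² ≤ 3 |x - y|²`, and `3 ≤ 2((π/4)² + 1)`.
-/

open Real Set Metric Module InnerProductGeometry
open scoped EuclideanGeometry
open scoped RealInnerProductSpace unitInterval NNReal

theorem three_eighths_mul_le_sin_half {θ : ℝ} (hθ₀ : 0 ≤ θ) (hθ₁ : θ ≤ 1) :
    3 / 8 * θ ≤ sin (θ / 2) := by
  have := sin_ge_sub_cube (x := θ / 2) (by positivity)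
  nlinarith [mul_nonneg hθ₀ (mul_nonneg hθ₀ hθ₀), mul_le_mul_of_nonneg_left hθ₁ hθ₀]

theorem five_sixteenths_mul_le_sin_half {θ : ℝ} (hθ₀ : 0 ≤ θ) (hθ : θ ≤ π) :
    5 / 16 * θ ≤ sin (θ / 2) := by
  have hJordan := mul_le_sin (x := θ / 2) (by positivity) (by linarith)
  have hπ : π < 16 / 5 := by linarith [pi_lt_d2]
  calc 5 / 16 * θ ≤ θ / π := by
        rw [le_div_iff₀ pi_pos]
        nlinarith
    _ = 2 / π * (θ / 2) := by ring
    _ ≤ sin (θ / 2) := hJordan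

theorem sq_mul_add_le_three_mul {a d θ : ℝ} (ha : 0 ≤ a) (hd : 0 ≤ d) (hθ₀ : 0 ≤ θ)
    (hθ : θ ≤ π) : (a * θ + d) ^ 2 ≤ 3 * (d ^ 2 + 4 * a * (a + d) * sin (θ / 2) ^ 2) := by
  have had : 0 ≤ a * (a + d) := by positivity
  rcases le_total θ 1 with hθ₁ | hθ₁
  · have hs := three_eighths_mul_le_sin_half hθ₀ hθ₁
    have hs2 : (3 / 8 * θ) ^ 2 ≤ sin (θ / 2) ^ 2 := pow_le_pow_left₀ (by positivity) hs 2
    nlinarith [mul_le_mul_of_nonneg_left hs2 had, sq_nonneg (d - a * θ / 2),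
      mul_nonneg (mul_nonneg ha hd) (sq_nonneg θ)]
  · have hs := five_sixteenths_mul_le_sin_half hθ₀ hθ
    have hs2 : (5 / 16 * θ) ^ 2 ≤ sin (θ / 2) ^ 2 := pow_le_pow_left₀ (by positivity) hs 2
    nlinarith [mul_le_mul_of_nonneg_left hs2 had, sq_nonneg (d - a * θ / 5),
      mul_nonneg (mul_nonneg ha hd) (mul_nonneg hθ₀ (sub_nonneg.2 hθ₁))]

theorem mul_add_sub_le_sqrt_mul_sqrt {a b θ : ℝ} (ha : 0 ≤ a) (hab : a ≤ b) (hθ₀ : 0 ≤ θ)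
    (hθ : θ ≤ π) :
    a * θ + (b - a) ≤ √2 * √((π / 4) ^ 2 + 1) * √(a ^ 2 + b ^ 2 - 2 * a * b * cos θ) := by
  have hcos : a ^ 2 + b ^ 2 - 2 * a * b * cos θ
      = (b - a) ^ 2 + 4 * a * (a + (b - a)) * sin (θ / 2) ^ 2 := by
    rw [sin_sq_eq_half_sub, mul_div_cancel₀ θ two_ne_zero]
    ring
  have hkey := sq_mul_add_le_three_mul ha (sub_nonneg.2 hab) hθ₀ hθ
  have hπ : (3 : ℝ) ≤ 2 * ((π / 4) ^ 2 + 1) := by nlinarith [pi_gt_three]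
  rw [← sqrt_mul zero_le_two, ← sqrt_mul (by positivity), hcos]
  apply le_sqrt_of_sq_le
  calc (a * θ + (b - a)) ^ 2 ≤ 3 * ((b - a) ^ 2 + 4 * a * (a + (b - a)) * sin (θ / 2) ^ 2) := hkey
    _ ≤ _ := by gcongr

theorem LipschitzOnWith.eVariationOn_Icc_le {X : Type*} [PseudoEMetricSpace X] {f : ℝ → X}
    {K : ℝ≥0} {a b : ℝ} (hf : LipschitzOnWith K f (Icc a b)) :
    eVariationOn f (Icc a b) ≤ K * ENNReal.ofReal (b - a) := by
  simpa using hf.comp_eVariationOn_le (g := id) (mapsTo_id _)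

namespace Path

variable {X : Type*} [PseudoEMetricSpace X] {x y z : X}

theorem eVariationOn_extend_symm (γ : Path x y) :
    eVariationOn γ.symm.extend I = eVariationOn γ.extend I := by
  rw [extend_symm, ← Function.comp_def,
    eVariationOn.comp_eq_of_antitoneOn _ _ fun s _ t _ hst ↦ sub_le_sub_left hst 1,
    image_const_sub_Icc]
  norm_num

theorem eVariationOn_extend_trans (γ : Path x y) (γ' : Path y z) :
    eVariationOn (γ.trans γ').extend I = eVariationOn γ.extend I + eVariationOn γ'.extend I := by
  have h₁ : eVariationOn (γ.trans γ').extend (Icc 0 (1 / 2)) = eVariationOn γ.extend I := by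
    rw [eVariationOn.eq_of_eqOn fun t ht ↦ extend_trans_of_le_half γ γ' ht.2,
      ← Function.comp_def (γ.extend),
      eVariationOn.comp_eq_of_monotoneOn _ _ fun s _ t _ hst ↦ by linarith,
      image_mul_left_Icc' two_pos]
    norm_num
  have h₂ : eVariationOn (γ.trans γ').extend (Icc (1 / 2) 1) = eVariationOn γ'.extend I := by
    rw [eVariationOn.eq_of_eqOn fun t ht ↦ extend_trans_of_half_le γ γ' ht.1,
      ← Function.comp_def (γ'.extend) (fun t ↦ 2 * t - 1),
      eVariationOn.comp_eq_of_monotoneOn _ _ fun s _ t _ hst ↦ by linarith,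
      ← image_image (· - 1) (2 * ·), image_mul_left_Icc' two_pos, image_sub_const_Icc]
    norm_num
  have hsplit := eVariationOn.Icc_add_Icc (γ.trans γ').extend (s := univ)
    (by norm_num : (0 : ℝ) ≤ 1 / 2) (by norm_num : (1 / 2 : ℝ) ≤ 1) (mem_univ _)
  simp only [univ_inter] at hsplit
  rw [← h₁, ← h₂, hsplit]

theorem eqOn_extend_ofLine {f : ℝ → X} (hf : ContinuousOn f I) (h₀ : f 0 = x) (h₁ : f 1 = y) :
    EqOn (ofLine hf h₀ h₁).extend f I := fun t ht ↦ by
  simp [extend_apply _ ht, ofLine]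

end Path

theorem Path.eVariationOn_extend_segment_le {E : Type*} [NormedAddCommGroup E] [NormedSpace ℝ E]
    (a b : E) : eVariationOn (Path.segment a b).extend I ≤ edist a b := by
  rw [eVariationOn.eq_of_eqOn (Path.eqOn_extend_segment a b)]
  have := ((lipschitzWith_lineMap (𝕜 := ℝ) a b).lipschitzOnWith (s := I)).eVariationOn_Icc_le
  simpa using this

section InnerProductSpace

variable {E : Type*} [NormedAddCommGroup E] [InnerProductSpace ℝ E]

theorem exists_norm_eq_one_inner_eq_zero [FiniteDimensional ℝ E] (hE : 2 ≤ finrank ℝ E) (u : E) :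
    ∃ v : E, ‖v‖ = 1 ∧ ⟪u, v⟫ = 0 := by
  have hspan : finrank ℝ (ℝ ∙ u) ≤ 1 := by
    simpa using finrank_span_le_card ({u} : Set E)
  have hpos : 0 < finrank ℝ (ℝ ∙ u)ᗮ := by
    have := (ℝ ∙ u).finrank_add_finrank_orthogonal
    omega
  obtain ⟨⟨z, hz⟩, hz₀⟩ := Module.finrank_pos_iff_exists_ne_zero.1 hpos
  have hz₀' : z ≠ 0 := fun h ↦ hz₀ (by simp [h])
  refine ⟨(‖z‖⁻¹ : ℝ) • z, norm_smul_inv_norm hz₀', ?_⟩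
  rw [real_inner_smul_right, Submodule.mem_orthogonal_singleton_iff_inner_right.1 hz, mul_zero]

theorem exists_eq_cos_angle_smul_add_sin_angle_smul [FiniteDimensional ℝ E]
    (hE : 2 ≤ finrank ℝ E) {u w : E} (hu : ‖u‖ = 1) (hw : ‖w‖ = 1) :
    ∃ v : E, ‖v‖ = 1 ∧ ⟪u, v⟫ = 0 ∧ w = cos (angle u w) • u + sin (angle u w) • v := by
  set z := w - ⟪u, w⟫ • u with hz
  have hcos : cos (angle u w) = ⟪u, w⟫ := by rw [cos_angle, hu, hw]; simp
  have huz : ⟪u, z⟫ = 0 := by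
    rw [hz, inner_sub_right, real_inner_smul_right, real_inner_self_eq_norm_sq, hu]; ring
  have hsin : sin (angle u w) = ‖z‖ := by
    have hz2 : ‖z‖ ^ 2 = 1 - ⟪u, w⟫ ^ 2 := by
      rw [hz, norm_sub_sq_real, norm_smul, real_inner_smul_right, hw, hu, real_inner_comm,
        Real.norm_eq_abs, mul_one, sq_abs]
      ring
    rw [← pow_left_inj₀ (sin_angle_nonneg u w) (norm_nonneg z) two_ne_zero, hz2, sin_sq, hcos]
  rw [hcos, hsin]
  rcases eq_or_ne z 0 with h₀ | h₀
  · obtain ⟨v, hv, huv⟩ := exists_norm_eq_one_inner_eq_zero hE u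
    refine ⟨v, hv, huv, ?_⟩
    rw [h₀, norm_zero, zero_smul, add_zero, ← sub_eq_zero, ← hz, h₀]
  · refine ⟨(‖z‖⁻¹ : ℝ) • z, norm_smul_inv_norm h₀, ?_, ?_⟩
    · rw [real_inner_smul_right, huz, mul_zero]
    · rw [smul_inv_smul₀ (norm_ne_zero_iff.2 h₀), hz]
      abel

noncomputable def circleArc (ξ u v : E) (a θ : ℝ) (s : ℝ) : E :=
  ξ + a • (cos (θ * s) • u + sin (θ * s) • v)

theorem continuous_circleArc (ξ u v : E) (a θ : ℝ) : Continuous (circleArc ξ u v a θ) := by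
  unfold circleArc
  fun_prop

section Orthonormal

variable {u v : E} (hu : ‖u‖ = 1) (hv : ‖v‖ = 1) (huv : ⟪u, v⟫ = 0)
include hu hv huv

theorem norm_smul_add_smul_sq (p q : ℝ) : ‖p • u + q • v‖ ^ 2 = p ^ 2 + q ^ 2 := by
  rw [norm_add_sq_real, norm_smul, norm_smul, real_inner_smul_left, real_inner_smul_right, huv,
    hu, hv]
  simp [sq_abs]

theorem norm_cos_smul_add_sin_smul (s : ℝ) : ‖cos s • u + sin s • v‖ = 1 := by
  have h := norm_smul_add_smul_sq hu hv huv (cos s) (sin s)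
  rwa [cos_sq_add_sin_sq, pow_eq_one_iff_of_nonneg (norm_nonneg _) two_ne_zero] at h

theorem dist_cos_smul_add_sin_smul_le (s t : ℝ) :
    dist (cos s • u + sin s • v) (cos t • u + sin t • v) ≤ dist s t := by
  have hsub : cos s • u + sin s • v - (cos t • u + sin t • v)
      = (cos s - cos t) • u + (sin s - sin t) • v := by
    simp only [sub_smul]; abel
  rw [dist_eq_norm, hsub, Real.dist_eq, ← pow_le_pow_iff_left₀ (norm_nonneg _) (abs_nonneg _)
    two_ne_zero, norm_smul_add_smul_sq hu hv huv, sq_abs]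
  have h := one_sub_sq_div_two_le_cos (x := s - t)
  rw [cos_sub] at h
  nlinarith [sin_sq_add_cos_sq s, sin_sq_add_cos_sq t]

theorem dist_circleArc_center (ξ : E) {a : ℝ} (ha : 0 ≤ a) (θ s : ℝ) :
    dist (circleArc ξ u v a θ s) ξ = a := by
  rw [circleArc, dist_eq_norm, add_sub_cancel_left, norm_smul,
    norm_cos_smul_add_sin_smul hu hv huv, Real.norm_eq_abs, abs_of_nonneg ha, mul_one]

theorem lipschitzWith_circleArc (ξ : E) {a θ : ℝ} (ha : 0 ≤ a) (hθ : 0 ≤ θ) :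
    LipschitzWith (a * θ).toNNReal (circleArc ξ u v a θ) := by
  refine LipschitzWith.of_dist_le_mul fun s t ↦ ?_
  rw [Real.coe_toNNReal _ (mul_nonneg ha hθ)]
  simp only [circleArc, dist_add_left, dist_smul₀, Real.norm_eq_abs, abs_of_nonneg ha]
  calc a * dist (cos (θ * s) • u + sin (θ * s) • v) (cos (θ * t) • u + sin (θ * t) • v)
      ≤ a * dist (θ * s) (θ * t) := by gcongr; exact dist_cos_smul_add_sin_smul_le hu hv huv _ _
    _ = a * θ * dist s t := by
      rw [Real.dist_eq, Real.dist_eq, ← mul_sub, abs_mul, abs_of_nonneg hθ]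
      ring

end Orthonormal

theorem exists_path_sphere_eVariationOn_le_mul_angle [FiniteDimensional ℝ E]
    (hE : 2 ≤ finrank ℝ E) {ξ x z : E} (h : dist z ξ = dist x ξ) :
    ∃ γ : Path x z, range γ ⊆ sphere ξ (dist x ξ) ∧
      eVariationOn γ.extend I ≤ ENNReal.ofReal (dist x ξ * ∠ x ξ z) := by
  rcases (dist_nonneg : 0 ≤ dist x ξ).eq_or_lt with ha | ha
  · obtain rfl : x = ξ := dist_eq_zero.1 ha.symm
    obtain rfl : z = x := dist_eq_zero.1 (h.trans ha.symm)
    refine ⟨Path.refl z, by simp, ?_⟩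
    rw [Path.refl_extend, eVariationOn.constant_on (f := ContinuousMap.const ℝ z)
      ((subsingleton_singleton (a := z)).anti (image_subset_iff.2 fun _ _ ↦ rfl))]
    positivity
  set a := dist x ξ
  set u := a⁻¹ • (x - ξ)
  set w := a⁻¹ • (z - ξ)
  have hu : ‖u‖ = 1 := by simp [u, norm_smul, ← dist_eq_norm, a, ha.ne']
  have hw : ‖w‖ = 1 := by simp [w, norm_smul, ← dist_eq_norm, h, a, ha.ne']
  obtain ⟨v, hv, huv, hwv⟩ := exists_eq_cos_angle_smul_add_sin_angle_smul hE hu hw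
  have hθ : angle u w = ∠ x ξ z := by
    rw [angle_smul_left_of_pos _ _ (inv_pos.2 ha), angle_smul_right_of_pos _ _ (inv_pos.2 ha)]
    rfl
  have hθ₀ : 0 ≤ ∠ x ξ z := EuclideanGeometry.angle_nonneg x ξ z
  have hf₀ : circleArc ξ u v a (∠ x ξ z) 0 = x := by
    simp [circleArc, u, smul_smul, mul_inv_cancel₀ ha.ne']
  have hf₁ : circleArc ξ u v a (∠ x ξ z) 1 = z := by
    rw [circleArc, mul_one, ← hθ, ← hwv]
    simp [w, smul_smul, mul_inv_cancel₀ ha.ne']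
  have hf := (continuous_circleArc ξ u v a (∠ x ξ z)).continuousOn (s := I)
  refine ⟨Path.ofLine hf hf₀ hf₁, ?_, ?_⟩
  · rintro _ ⟨t, rfl⟩
    obtain ⟨s, -, hs⟩ := Path.ofLine_mem hf hf₀ hf₁ t
    rw [← hs, Metric.mem_sphere, dist_circleArc_center hu hv huv ξ ha.le]
  · rw [eVariationOn.eq_of_eqOn (Path.eqOn_extend_ofLine _ _ _)]
    have := ((lipschitzWith_circleArc hu hv huv ξ ha.le hθ₀).lipschitzOnWith (s := I)
      ).eVariationOn_Icc_le
    rw [sub_zero, ENNReal.ofReal_one, mul_one] at this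
    exact this

theorem exists_path_eVariationOn_le_mul_angle_add_sub [FiniteDimensional ℝ E]
    (hE : 2 ≤ finrank ℝ E) {ξ x y : E} (hxy : dist x ξ ≤ dist y ξ) :
    ∃ γ : Path x y, range γ ⊆ (ball ξ (dist x ξ))ᶜ ∧
      eVariationOn γ.extend I ≤ ENNReal.ofReal (dist x ξ * ∠ x ξ y + (dist y ξ - dist x ξ)) := by
  set a := dist x ξ
  set b := dist y ξ
  set z := AffineMap.lineMap ξ y (a / b)
  have ha : 0 ≤ a := dist_nonneg
  have hab : a / b * b = a := div_mul_cancel_of_imp fun hb ↦ le_antisymm (hb ▸ hxy) ha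
  have hz : dist z ξ = a := by
    rw [dist_lineMap_left, dist_comm, Real.norm_eq_abs, abs_of_nonneg (by positivity), hab]
  have hzy : dist z y = b - a := by
    rw [dist_lineMap_right, dist_comm, Real.norm_eq_abs,
      abs_of_nonneg (sub_nonneg.2 (div_le_one_of_le₀ hxy dist_nonneg)), sub_mul, one_mul, hab]
  have hangle : a * ∠ x ξ z = a * ∠ x ξ y := by
    rcases ha.eq_or_lt with ha | ha
    · rw [← ha, zero_mul, zero_mul]
    · rw [EuclideanGeometry.angle_smul_right_of_pos x (div_pos ha (ha.trans_le hxy))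
        (AffineMap.lineMap_vsub_left ξ y _).symm]
  obtain ⟨γ, hγ, hvar⟩ := exists_path_sphere_eVariationOn_le_mul_angle hE hz
  refine ⟨γ.trans (Path.segment z y), ?_, ?_⟩
  · rw [Path.trans_range, Path.range_segment, union_subset_iff]
    refine ⟨hγ.trans fun p hp ↦ ?_, fun p hp ↦ ?_⟩
    · rw [Metric.mem_sphere] at hp
      simp [hp, a]
    · have hseg := dist_add_dist_of_mem_segment hp
      rw [mem_compl_iff, mem_ball, not_lt]
      linarith [dist_triangle y p ξ, dist_comm p y, dist_nonneg (x := z) (y := p)]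
  · rw [Path.eVariationOn_extend_trans, ← hangle]
    calc _ ≤ ENNReal.ofReal (a * ∠ x ξ z) + edist z y :=
          add_le_add hvar (Path.eVariationOn_extend_segment_le z y)
      _ = _ := by
        rw [edist_dist, hzy, ENNReal.ofReal_add
          (mul_nonneg ha (EuclideanGeometry.angle_nonneg x ξ z)) (sub_nonneg.2 hxy)]

theorem exists_path_eVariationOn_le_mul_dist [FiniteDimensional ℝ E] (hE : 2 ≤ finrank ℝ E)
    (ξ x y : E) :
    ∃ γ : Path x y, range γ ⊆ (ball ξ (min (dist x ξ) (dist y ξ)))ᶜ ∧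
      eVariationOn γ.extend I ≤ ENNReal.ofReal (√2 * √((π / 4) ^ 2 + 1) * dist x y) := by
  wlog hxy : dist x ξ ≤ dist y ξ generalizing x y
  · obtain ⟨γ, hγ, hvar⟩ := this y x (le_of_not_ge hxy)
    refine ⟨γ.symm, ?_, ?_⟩
    · rwa [Path.symm_range, min_comm]
    · rwa [Path.eVariationOn_extend_symm, dist_comm x y]
  obtain ⟨γ, hγ, hvar⟩ := exists_path_eVariationOn_le_mul_angle_add_sub hE hxy
  refine ⟨γ, by rwa [min_eq_left hxy], hvar.trans (ENNReal.ofReal_le_ofReal ?_)⟩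
  calc _ ≤ √2 * √((π / 4) ^ 2 + 1) *
        √(dist x ξ ^ 2 + dist y ξ ^ 2 - 2 * dist x ξ * dist y ξ * cos (∠ x ξ y)) :=
        mul_add_sub_le_sqrt_mul_sqrt dist_nonneg hxy (EuclideanGeometry.angle_nonneg x ξ y)
          (EuclideanGeometry.angle_le_pi x ξ y)
    _ = _ := by
      rw [← sqrt_mul_self (dist_nonneg : 0 ≤ dist x y), EuclideanGeometry.law_cos x ξ y]
      ring_nf

end InnerProductSpace

/-- For an open ball `U = ball ξ r` in `ℝ³` and points `x, y` outside `closure U`, there is a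
rectifiable path from `x` to `y` avoiding `closure U` of length at most
`√2 · √((π/4)² + 1) · |x − y|`. -/
theorem stmt1 (ξ : EuclideanSpace ℝ (Fin 3)) (r : ℝ) (hr : 0 < r)
    (x y : EuclideanSpace ℝ (Fin 3))
    (hx : x ∉ closure (Metric.ball ξ r)) (hy : y ∉ closure (Metric.ball ξ r)) :
    ∃ γ : ℝ → EuclideanSpace ℝ (Fin 3), ContinuousOn γ (Set.Icc 0 1) ∧
      γ 0 = x ∧ γ 1 = y ∧
      (∀ t ∈ Set.Icc (0:ℝ) 1, γ t ∉ closure (Metric.ball ξ r)) ∧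
      eVariationOn γ (Set.Icc 0 1)
        ≤ ENNReal.ofReal (Real.sqrt 2 * Real.sqrt ((Real.pi/4)^2 + 1) * dist x y) := by
  rw [closure_ball ξ hr.ne'] at hx hy ⊢
  obtain ⟨γ, hγ, hvar⟩ := exists_path_eVariationOn_le_mul_dist (by simp) ξ x y
  have hr' : r < min (dist x ξ) (dist y ξ) := by
    rw [mem_closedBall, not_le] at hx hy
    exact lt_min hx hy
  refine ⟨γ.extend, γ.continuous_extend.continuousOn, γ.extend_zero, γ.extend_one,
    fun t ht h ↦ ?_, hvar⟩
  rw [γ.extend_apply ht] at h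
  exact hγ (mem_range_self _) (closedBall_subset_ball hr' h)
end

section
/- Let D₀ ⊂ ℝ³ be convex, ε > 0, and let x, y lie in (D₀)_ε = {z ∈ ℝ³ \ closure(D₀) : dist(z, ∂D₀) ≥ ε}, with nearest boundary points q(x), q(y) ∈ ∂D₀ and outward unit normals ν_{q(x)}, ν_{q(y)} there. If ν_{q(x)}·ν_{q(y)} ≥ α for some α ∈ (−1, 0], then the infimum d_ε(x,y) of lengths of paths from x to y staying in (D₀)_ε satisfies d_ε(x,y) ≤ (√2/(1+α))·|x − y|. -/
/-!
The plane through the nearest point `q(x)` orthogonal to `ν = ν_{q(x)}` supports the convex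
body, so every point of the half-space `{z : ⟪z - x, ν⟫ ≥ 0}` is at distance at least
`dist x q(x) ≥ ε` from `D₀`; likewise for `y` and `ν'`. It therefore suffices to join `x` to `y`
by two segments through a corner `m` lying in both half-spaces. If `y` or `x` already lies in the
other point's half-space, take `m = y` or `m = x`. Otherwise put `a = -⟪y - x, ν⟫ > 0`,
`b = ⟪y - x, ν'⟫ > 0`, `θ = b / (a + b)`, and move `x + θ (y - x)` along `ν + ν'` onto both
boundary planes. The two legs then have lengths `θ R` and `(1 - θ) R` with
`R² = ‖y - x‖² + 2ab / (1 + ⟪ν, ν'⟫)`, and Cauchy–Schwarz for `ν - ν'` gives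
`R ≤ √(2 / (1 + ⟪ν, ν'⟫)) ‖y - x‖ ≤ √2 / (1 + α) ‖y - x‖`.
-/

open Metric Set RealInnerProductSpace

lemma infDist_frontier_le_dist_of_mem_closure {E : Type*} [NormedAddCommGroup E]
    [NormedSpace ℝ E] [FiniteDimensional ℝ E] {s : Set E} {x z : E} (hx : x ∉ closure s)
    (hz : z ∈ closure s) :
    infDist x (frontier s) ≤ dist x z := by
  have hne : (closure s)ᶜ ≠ univ := fun h => (h ▸ mem_univ z : z ∈ (closure s)ᶜ) hz
  obtain ⟨p, hp, hxp⟩ := exists_mem_frontier_infDist_compl_eq_dist (mem_compl hx) hne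
  rw [frontier_compl] at hp
  calc infDist x (frontier s) ≤ dist x p := infDist_le_dist_of_mem (frontier_closure_subset hp)
    _ = infDist x (closure s) := by rw [← hxp, compl_compl]
    _ ≤ dist x z := infDist_le_dist_of_mem hz

section NearestPoint

variable {E : Type*} [NormedAddCommGroup E] [InnerProductSpace ℝ E] [FiniteDimensional ℝ E]
  {s : Set E} {x q z : E}

lemma inner_sub_le_zero_of_dist_eq_infDist_frontier (hs : Convex ℝ s) (hx : x ∉ closure s)
    (hq : q ∈ frontier s) (hxq : dist x q = infDist x (frontier s)) (hz : z ∈ closure s) :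
    ⟪x - q, z - q⟫ ≤ 0 := by
  have hqs : q ∈ closure s := frontier_subset_closure hq
  have hdist : infDist x (closure s) = dist x q :=
    le_antisymm (infDist_le_dist_of_mem hqs) <| (le_infDist ⟨q, hqs⟩).2 fun _ hw =>
      hxq ▸ infDist_frontier_le_dist_of_mem_closure hx hw
  refine (norm_eq_iInf_iff_real_inner_le_zero hs.closure hqs).1 ?_ z hz
  simpa only [infDist_eq_iInf, dist_eq_norm] using hdist.symm

lemma dist_le_dist_of_inner_sub_nonneg (hs : Convex ℝ s) (hx : x ∉ closure s)
    (hq : q ∈ frontier s) (hxq : dist x q = infDist x (frontier s))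
    (hz : 0 ≤ ⟪z - x, x - q⟫) {w : E} (hw : w ∈ closure s) : dist x q ≤ dist z w := by
  have hsupp := inner_sub_le_zero_of_dist_eq_infDist_frontier hs hx hq hxq hw
  have hpos : 0 < ‖x - q‖ :=
    norm_sub_pos_iff.2 fun h => hx (h ▸ frontier_subset_closure hq)
  have hsq : ‖x - q‖ ^ 2 ≤ ‖z - w‖ * ‖x - q‖ := by
    calc ‖x - q‖ ^ 2 ≤ ⟪z - x, x - q⟫ + ‖x - q‖ ^ 2 - ⟪x - q, w - q⟫ := by linarith
      _ = ⟪z - x, x - q⟫ + ⟪x - q, x - q⟫ - ⟪w - q, x - q⟫ := by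
        rw [real_inner_self_eq_norm_sq, real_inner_comm (w - q)]
      _ = ⟪z - w, x - q⟫ := by
        rw [← inner_add_left, ← inner_sub_left]
        congr 1
        abel
      _ ≤ ‖z - w‖ * ‖x - q‖ := real_inner_le_norm _ _
  rw [dist_eq_norm, dist_eq_norm]
  nlinarith

lemma notMem_closure_and_dist_le_infDist_frontier (hs : Convex ℝ s) (hx : x ∉ closure s)
    (hq : q ∈ frontier s) (hxq : dist x q = infDist x (frontier s))
    (hz : 0 ≤ ⟪z - x, (dist x q)⁻¹ • (x - q)⟫) :
    z ∉ closure s ∧ dist x q ≤ infDist z (frontier s) := by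
  have hxq_pos : 0 < dist x q := dist_pos.2 fun h => hx (h ▸ frontier_subset_closure hq)
  rw [real_inner_smul_right] at hz
  have key := fun {w} => dist_le_dist_of_inner_sub_nonneg (w := w) hs hx hq hxq
    (nonneg_of_mul_nonneg_right hz (inv_pos.2 hxq_pos))
  refine ⟨fun hzs => ?_, (le_infDist ⟨q, hq⟩).2 fun w hw => key (frontier_subset_closure hw)⟩
  linarith [key hzs, dist_self z]

end NearestPoint

section Corner

variable {E : Type*} [NormedAddCommGroup E] [InnerProductSpace ℝ E] {u v : E}

lemma inner_sub_nonneg_of_mem_segment {x m z n : E} (hm : 0 ≤ ⟪m - x, n⟫)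
    (hz : z ∈ segment ℝ x m) : 0 ≤ ⟪z - x, n⟫ := by
  rw [segment_eq_image'] at hz
  obtain ⟨t, ⟨ht0, -⟩, rfl⟩ := hz
  rw [add_sub_cancel_left, real_inner_smul_left]
  exact mul_nonneg ht0 hm

/-- For unit vectors `u`, `v`: the projection of `w` onto the orthogonal complement of `u` along
the bisector `u + v`. -/
noncomputable def obliqueProj (u v w : E) : E := w - (⟪w, u⟫ / (1 + ⟪u, v⟫)) • (u + v)

lemma inner_obliqueProj_left (hu : ‖u‖ = 1) (huv : 1 + ⟪u, v⟫ ≠ 0) (w : E) :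
    ⟪obliqueProj u v w, u⟫ = 0 := by
  rw [obliqueProj, inner_sub_left, real_inner_smul_left, inner_add_left,
    real_inner_self_eq_norm_sq, hu, real_inner_comm u v, one_pow, div_mul_cancel₀ _ huv, sub_self]

lemma norm_obliqueProj_sq (hu : ‖u‖ = 1) (hv : ‖v‖ = 1) (huv : 1 + ⟪u, v⟫ ≠ 0) (w : E) :
    ‖obliqueProj u v w‖ ^ 2 = ‖w‖ ^ 2 - 2 * ⟪w, u⟫ * ⟪w, v⟫ / (1 + ⟪u, v⟫) := by
  have hn : ‖u + v‖ ^ 2 = 2 * (1 + ⟪u, v⟫) := by rw [norm_add_sq_real, hu, hv]; ring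
  rw [obliqueProj, norm_sub_sq_real, real_inner_smul_right, inner_add_right, norm_smul,
    mul_pow, Real.norm_eq_abs, sq_abs, hn]
  field_simp
  ring

lemma norm_obliqueProj_le (hu : ‖u‖ = 1) (hv : ‖v‖ = 1) (huv : -1 < ⟪u, v⟫) (w : E) :
    ‖obliqueProj u v w‖ ≤ √(2 / (1 + ⟪u, v⟫)) * ‖w‖ := by
  have hpos : 0 < 1 + ⟪u, v⟫ := by linarith
  -- Cauchy–Schwarz for `w` and `u - v`
  have hcs : (⟪w, u⟫ - ⟪w, v⟫) ^ 2 ≤ ‖w‖ ^ 2 * (2 - 2 * ⟪u, v⟫) := by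
    have h := abs_real_inner_le_norm w (u - v)
    rw [← sq_le_sq₀ (abs_nonneg _) (by positivity), sq_abs, mul_pow, norm_sub_sq_real, hu, hv,
      inner_sub_right] at h
    linarith
  have hsq : ‖obliqueProj u v w‖ ^ 2 ≤ 2 / (1 + ⟪u, v⟫) * ‖w‖ ^ 2 := by
    have hnum : -(2 * ⟪w, u⟫ * ⟪w, v⟫) ≤ (1 - ⟪u, v⟫) * ‖w‖ ^ 2 := by
      nlinarith [sq_nonneg (⟪w, u⟫ + ⟪w, v⟫)]
    calc ‖obliqueProj u v w‖ ^ 2 = ‖w‖ ^ 2 + -(2 * ⟪w, u⟫ * ⟪w, v⟫) / (1 + ⟪u, v⟫) := by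
          rw [norm_obliqueProj_sq hu hv hpos.ne']; ring
      _ ≤ ‖w‖ ^ 2 + (1 - ⟪u, v⟫) * ‖w‖ ^ 2 / (1 + ⟪u, v⟫) := by gcongr
      _ = 2 / (1 + ⟪u, v⟫) * ‖w‖ ^ 2 := by field_simp; ring
  rw [← Real.sqrt_sq (norm_nonneg (obliqueProj u v w)), ← Real.sqrt_sq (norm_nonneg w),
    ← Real.sqrt_mul (by positivity)]
  exact Real.sqrt_le_sqrt hsq

lemma exists_inner_sub_nonneg_and_dist_add_dist_le (hu : ‖u‖ = 1) (hv : ‖v‖ = 1)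
    (huv : -1 < ⟪u, v⟫) (x y : E) :
    ∃ m, 0 ≤ ⟪m - x, u⟫ ∧ 0 ≤ ⟪m - y, v⟫ ∧
      dist x m + dist m y ≤ √(2 / (1 + ⟪u, v⟫)) * dist x y := by
  set K := √(2 / (1 + ⟪u, v⟫))
  have hpos : 0 < 1 + ⟪u, v⟫ := by linarith
  have hK : 1 ≤ K := by
    have hcs := real_inner_le_norm u v
    rw [hu, hv, one_mul] at hcs
    rw [Real.one_le_sqrt, one_le_div hpos]
    linarith
  by_cases hy : 0 ≤ ⟪y - x, u⟫
  · exact ⟨y, hy, by simp, by nlinarith [dist_nonneg (x := x) (y := y), dist_self y]⟩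
  by_cases hx : 0 ≤ ⟪x - y, v⟫
  · exact ⟨x, by simp, hx, by nlinarith [dist_nonneg (x := x) (y := y), dist_self x]⟩
  -- The corner `x + θ • obliqueProj u v w` lies on both boundary planes because `θ` makes the
  -- `u + v`-components of the two legs agree (`hθ`).
  obtain ⟨w, rfl⟩ : ∃ w, y = x + w := ⟨y - x, by abel⟩
  rw [add_sub_cancel_left] at hy
  rw [show x - (x + w) = -w by abel, inner_neg_left] at hx
  have ha : 0 < -⟪w, u⟫ := by linarith
  have hb : 0 < ⟪w, v⟫ := by linarith
  obtain ⟨θ, hθdef⟩ : ∃ θ, θ = ⟪w, v⟫ / (-⟪w, u⟫ + ⟪w, v⟫) := ⟨_, rfl⟩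
  have hθ : θ * ⟪w, u⟫ + (1 - θ) * ⟪w, v⟫ = 0 := by
    rw [hθdef]; field_simp; ring
  have hθ0 : 0 ≤ θ := by rw [hθdef]; positivity
  have hθ1 : θ ≤ 1 := hθdef ▸ div_le_one_of_le₀ (by linarith) (by linarith)
  have hmy : x + θ • obliqueProj u v w - (x + w) = -((1 - θ) • obliqueProj v u w) := by
    simp only [obliqueProj, real_inner_comm u v]
    linear_combination (norm := module) (-(1 + ⟪u, v⟫)⁻¹ * hθ) • (u + v)
  have hvu : -1 < ⟪v, u⟫ := by rwa [real_inner_comm]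
  have hPv : ‖obliqueProj v u w‖ ≤ K * ‖w‖ := by
    have h := norm_obliqueProj_le hv hu hvu w
    rwa [real_inner_comm u v] at h
  refine ⟨x + θ • obliqueProj u v w, ?_, ?_, ?_⟩
  · rw [add_sub_cancel_left, real_inner_smul_left, inner_obliqueProj_left hu hpos.ne', mul_zero]
  · rw [hmy, inner_neg_left, real_inner_smul_left, inner_obliqueProj_left hv (by linarith),
      mul_zero, neg_zero]
  calc dist x (x + θ • obliqueProj u v w) + dist (x + θ • obliqueProj u v w) (x + w)
      = θ * ‖obliqueProj u v w‖ + (1 - θ) * ‖obliqueProj v u w‖ := by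
        rw [dist_comm, dist_eq_norm, add_sub_cancel_left, dist_eq_norm, hmy, norm_neg, norm_smul,
          norm_smul, Real.norm_of_nonneg hθ0, Real.norm_of_nonneg (sub_nonneg.2 hθ1)]
    _ ≤ θ * (K * ‖w‖) + (1 - θ) * (K * ‖w‖) := by
        gcongr
        exact norm_obliqueProj_le hu hv huv w
    _ = K * dist x (x + w) := by rw [dist_self_add_right]; ring

end Corner

lemma sqrt_two_div_one_add_le {α c : ℝ} (hα : α ∈ Ioc (-1) 0) (hc : α ≤ c) :
    √(2 / (1 + c)) ≤ √2 / (1 + α) := by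
  have hpos : 0 < 1 + α := by linarith [hα.1]
  calc √(2 / (1 + c)) ≤ √(2 / (1 + α)) := Real.sqrt_le_sqrt (by gcongr)
    _ = √2 / √(1 + α) := Real.sqrt_div' 2 hpos.le
    _ ≤ √2 / (1 + α) := by
        gcongr
        exact Real.le_sqrt_self_iff.2 (by linarith [hα.2])

lemma eVariationOn_Icc_le_of_dist_le {E : Type*} [PseudoMetricSpace E] {f : ℝ → E} {a b C : ℝ}
    (hC : 0 ≤ C)
    (hf : ∀ s ∈ Icc a b, ∀ t ∈ Icc a b, dist (f s) (f t) ≤ C * dist s t) :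
    eVariationOn f (Icc a b) ≤ ENNReal.ofReal (C * (b - a)) := by
  have hlip : LipschitzOnWith (Real.toNNReal C) f (Icc a b) :=
    LipschitzOnWith.of_dist_le_mul fun s hs t ht => by
      rw [Real.coe_toNNReal _ hC]; exact hf s hs t ht
  calc eVariationOn f (Icc a b) ≤ Real.toNNReal C * eVariationOn id (Icc a b) :=
        hlip.comp_eVariationOn_le (mapsTo_id _)
    _ = ENNReal.ofReal (C * (b - a)) := by
        rw [eVariationOn_id_Icc, ENNReal.ofReal_mul hC]; rfl

section PolygonalPath

variable {E : Type*} [NormedAddCommGroup E] [NormedSpace ℝ E]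

lemma eVariationOn_lineMap_two_mul_sub_le (x y : E) (c a b : ℝ) :
    eVariationOn (fun t => AffineMap.lineMap x y (2 * t - c)) (Icc a b) ≤
      ENNReal.ofReal (2 * dist x y * (b - a)) :=
  eVariationOn_Icc_le_of_dist_le (by positivity) fun s _ t _ => by
    rw [dist_lineMap_lineMap, Real.dist_eq, Real.dist_eq, show 2 * s - c - (2 * t - c) =
      2 * (s - t) by ring, abs_mul, abs_two]
    exact le_of_eq (by ring)

lemma exists_path_mem_segment_union_eVariationOn_le (x m y : E) :
    ∃ γ : ℝ → E, ContinuousOn γ (Icc 0 1) ∧ γ 0 = x ∧ γ 1 = y ∧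
      (∀ t ∈ Icc (0 : ℝ) 1, γ t ∈ segment ℝ x m ∪ segment ℝ m y) ∧
      eVariationOn γ (Icc 0 1) ≤ ENNReal.ofReal (dist x m + dist m y) := by
  set γ : ℝ → E := fun t =>
    if t ≤ 1 / 2 then AffineMap.lineMap x m (2 * t) else AffineMap.lineMap m y (2 * t - 1)
  have h₁ : EqOn γ (fun t => AffineMap.lineMap x m (2 * t - 0)) (Icc 0 (1 / 2)) :=
    fun t ht => by simp only [γ, if_pos ht.2, sub_zero]
  have h₂ : EqOn γ (fun t => AffineMap.lineMap m y (2 * t - 1)) (Icc (1 / 2) 1) := by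
    rintro t ⟨ht, -⟩
    rcases ht.eq_or_lt with rfl | ht
    · norm_num [γ]
    · simp only [γ, if_neg ht.not_ge]
  refine ⟨γ, ?_, by norm_num [γ], by norm_num [γ], fun t ⟨ht0, ht1⟩ => ?_, ?_⟩
  · refine Continuous.continuousOn (Continuous.if_le ?_ ?_ continuous_id continuous_const ?_)
    · fun_prop
    · fun_prop
    · rintro t rfl; norm_num
  · by_cases ht : t ≤ 1 / 2
    · left
      rw [h₁ ⟨ht0, ht⟩]
      exact lineMap_mem_segment ℝ _ _ ⟨by linarith, by linarith⟩
    · right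
      rw [h₂ ⟨by linarith, ht1⟩]
      exact lineMap_mem_segment ℝ _ _ ⟨by linarith, by linarith⟩
  · have hsplit := eVariationOn.Icc_add_Icc γ (s := univ) (by norm_num : (0 : ℝ) ≤ 1 / 2)
      (by norm_num : (1 / 2 : ℝ) ≤ 1) (mem_univ _)
    rw [univ_inter, univ_inter, univ_inter] at hsplit
    rw [← hsplit, eVariationOn.eq_of_eqOn h₁, eVariationOn.eq_of_eqOn h₂,
      ENNReal.ofReal_add dist_nonneg dist_nonneg]
    gcongr
    · exact (eVariationOn_lineMap_two_mul_sub_le x m 0 0 (1 / 2)).trans_eq (by ring_nf)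
    · exact (eVariationOn_lineMap_two_mul_sub_le m y 1 (1 / 2) 1).trans_eq (by ring_nf)

end PolygonalPath

theorem stmt13_general (D₀ : Set (EuclideanSpace ℝ (Fin 3)))
    (hconv : Convex ℝ D₀)
    (ε α : ℝ) (hα : α ∈ Set.Ioc (-1:ℝ) 0)
    (x y qx qy : EuclideanSpace ℝ (Fin 3))
    (hx : x ∉ closure D₀) (hy : y ∉ closure D₀)
    (hxε : ε ≤ Metric.infDist x (frontier D₀)) (hyε : ε ≤ Metric.infDist y (frontier D₀))
    (hqx : qx ∈ frontier D₀ ∧ dist x qx = Metric.infDist x (frontier D₀))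
    (hqy : qy ∈ frontier D₀ ∧ dist y qy = Metric.infDist y (frontier D₀))
    (hcos : α ≤ @inner ℝ _ _ ((dist x qx)⁻¹ • (x - qx)) ((dist y qy)⁻¹ • (y - qy))) :
    ∃ γ : ℝ → EuclideanSpace ℝ (Fin 3), ContinuousOn γ (Set.Icc 0 1) ∧
      γ 0 = x ∧ γ 1 = y ∧
      (∀ t ∈ Set.Icc (0:ℝ) 1, γ t ∉ closure D₀ ∧ ε ≤ Metric.infDist (γ t) (frontier D₀)) ∧
      eVariationOn γ (Set.Icc 0 1) ≤ ENNReal.ofReal (Real.sqrt 2 / (1 + α) * dist x y) := by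
  obtain ⟨hqx, hxqx⟩ := hqx
  obtain ⟨hqy, hyqy⟩ := hqy
  have hnormal : ∀ {z q}, z ∉ closure D₀ → q ∈ frontier D₀ → ‖(dist z q)⁻¹ • (z - q)‖ = 1 :=
    fun hz hq => by
      rw [dist_eq_norm]
      exact norm_smul_inv_norm (sub_ne_zero.2 fun h => hz (h ▸ frontier_subset_closure hq))
  obtain ⟨m, hmx, hmy, hlen⟩ := exists_inner_sub_nonneg_and_dist_add_dist_le
    (hnormal hx hqx) (hnormal hy hqy) (hα.1.trans_le hcos) x y
  obtain ⟨γ, hcont, h0, h1, hseg, hvar⟩ := exists_path_mem_segment_union_eVariationOn_le x m y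
  refine ⟨γ, hcont, h0, h1, fun t ht => ?_, hvar.trans <| ENNReal.ofReal_le_ofReal <|
    hlen.trans <| mul_le_mul_of_nonneg_right (sqrt_two_div_one_add_le hα hcos) dist_nonneg⟩
  rcases hseg t ht with h | h
  · exact (notMem_closure_and_dist_le_infDist_frontier hconv hx hqx hxqx
      (inner_sub_nonneg_of_mem_segment hmx h)).imp_right (hxqx ▸ hxε).trans
  · rw [segment_symm] at h
    exact (notMem_closure_and_dist_le_infDist_frontier hconv hy hqy hyqy
      (inner_sub_nonneg_of_mem_segment hmy h)).imp_right (hyqy ▸ hyε).trans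

/-- Lemma 4.5: for a convex obstacle `D₀` and points `x, y` of `(D₀)_ε` whose outward unit
normals at the nearest boundary points satisfy `ν_{q(x)}·ν_{q(y)} ≥ α` with `α ∈ (−1,0]`, the
intrinsic distance in `(D₀)_ε` satisfies `d_ε(x,y) ≤ (√2/(1+α))·|x−y|`; we exhibit a connecting
path in `(D₀)_ε` of length at most this bound. -/
theorem stmt13 (D₀ : Set (EuclideanSpace ℝ (Fin 3)))
    (hconv : Convex ℝ D₀) (hopen : IsOpen D₀) (hne : D₀.Nonempty)
    (hbd : Bornology.IsBounded D₀)
    (ε α : ℝ) (hε : 0 < ε) (hα : α ∈ Set.Ioc (-1:ℝ) 0)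
    (x y qx qy : EuclideanSpace ℝ (Fin 3))
    (hx : x ∉ closure D₀) (hy : y ∉ closure D₀)
    (hxε : ε ≤ Metric.infDist x (frontier D₀)) (hyε : ε ≤ Metric.infDist y (frontier D₀))
    (hqx : qx ∈ frontier D₀ ∧ dist x qx = Metric.infDist x (frontier D₀))
    (hqy : qy ∈ frontier D₀ ∧ dist y qy = Metric.infDist y (frontier D₀))
    (hcos : α ≤ @inner ℝ _ _ ((dist x qx)⁻¹ • (x - qx)) ((dist y qy)⁻¹ • (y - qy))) :
    ∃ γ : ℝ → EuclideanSpace ℝ (Fin 3), ContinuousOn γ (Set.Icc 0 1) ∧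
      γ 0 = x ∧ γ 1 = y ∧
      (∀ t ∈ Set.Icc (0:ℝ) 1, γ t ∉ closure D₀ ∧ ε ≤ Metric.infDist (γ t) (frontier D₀)) ∧
      eVariationOn γ (Set.Icc 0 1) ≤ ENNReal.ofReal (Real.sqrt 2 / (1 + α) * dist x y) :=
  stmt13_general D₀ hconv ε α hα x y qx qy hx hy hxε hyε hqx hqy hcos
end

section
/- Let K_ε(x,y;t) be the Dirichlet heat kernel of the open ball of radius ε centered at the origin in ℝ³. Then for all t > 0, K_ε(0,0;t) ≥ (4πt)^{−3/2} e^{−9π²t/(4ε²)}. -/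
/-!
With `a = π√t/ε` the claim reads `√π/(4a³) · e^{-9a²/4} ≤ ∑_{n≥1} f n`, where
`f x = x² e^{-a²x²}` and `√π/(4a³) = ∫_0^∞ f`. For `a ≥ 1` the term `n = 1` alone suffices.
For `a ≤ 1` compare sum and integral by the midpoint rule on the cells `[n - 1/2, n + 1/2]`:
on `[0, ∞)` the derivative `f'` is the nondecreasing function `L = f' - (2/a) e^{-a²x²}` plus a
nonincreasing one, so the midpoint error on a cell is at most an eighth of the increment of `L`
across it. These increments telescope, and `L ≤ 0` gives `∫_{1/2}^∞ f ≤ ∑ f n + 1/(4a)`.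
Together with `∫_0^{1/2} f ≤ 1/24` and `e^{-b} ≤ 1/(1 + b)` this leaves room for the factor
`e^{-9a²/4}`.
-/

open Real MeasureTheory Set Filter Topology

theorem add_symm_le_of_deriv_sub_antitoneOn {f f' L : ℝ → ℝ} {c h : ℝ}
    (hf : ∀ x ∈ Icc (c - h) (c + h), HasDerivAt f (f' x) x)
    (hL : MonotoneOn L (Icc (c - h) (c + h))) (hD : AntitoneOn (f' - L) (Icc (c - h) (c + h)))
    {u : ℝ} (hu : u ∈ Icc 0 h) :
    f (c + u) + f (c - u) ≤ 2 * f c + u * (L (c + h) - L (c - h)) := by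
  set p : ℝ → ℝ := fun v => 2 * f c + v * (L (c + h) - L (c - h)) - f (c + v) - f (c - v)
  have hmem : ∀ v ∈ Icc 0 h, c + v ∈ Icc (c - h) (c + h) ∧ c - v ∈ Icc (c - h) (c + h) :=
    fun v ⟨hv₀, hvh⟩ => ⟨⟨by linarith, by linarith⟩, ⟨by linarith, by linarith⟩⟩
  have hp : ∀ v ∈ Icc 0 h,
      HasDerivAt p (L (c + h) - L (c - h) - f' (c + v) + f' (c - v)) v := by
    intro v hv
    have hplus := (hf _ (hmem v hv).1).comp v ((hasDerivAt_id v).const_add c)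
    have hminus := (hf _ (hmem v hv).2).comp v ((hasDerivAt_id v).const_sub c)
    exact ((((hasDerivAt_id v).mul_const (L (c + h) - L (c - h))).const_add (2 * f c)).sub
      hplus |>.sub hminus).congr_deriv (by ring)
  have hmono : MonotoneOn p (Icc 0 h) := by
    refine monotoneOn_of_deriv_nonneg (convex_Icc 0 h)
      (fun v hv => (hp v hv).continuousAt.continuousWithinAt)
      (fun v hv => (hp v (interior_subset hv)).differentiableAt.differentiableWithinAt)
      fun v hv => ?_
    rw [interior_Icc] at hv
    have hv' := Ioo_subset_Icc_self hv
    obtain ⟨hplus, hminus⟩ := hmem v hv'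
    obtain ⟨hright, hleft⟩ := hmem h (right_mem_Icc.2 (hv'.1.trans hv'.2))
    rw [(hp v hv').deriv]
    have h₁ := hL hplus hright (by linarith [hv.2])
    have h₂ := hL hleft hminus (by linarith [hv.2])
    have h₃ := hD hminus hplus (by linarith [hv.1])
    simp only [Pi.sub_apply] at h₃
    linarith
  have := hmono (left_mem_Icc.2 (hu.1.trans hu.2)) hu hu.1
  simp only [p, zero_mul, add_zero, sub_zero] at this
  linarith

theorem integral_le_midpoint_of_deriv_sub_antitoneOn {f f' L : ℝ → ℝ} {c h : ℝ} (hh : 0 ≤ h)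
    (hf : ∀ x ∈ Icc (c - h) (c + h), HasDerivAt f (f' x) x)
    (hL : MonotoneOn L (Icc (c - h) (c + h))) (hD : AntitoneOn (f' - L) (Icc (c - h) (c + h))) :
    ∫ x in (c - h)..(c + h), f x ≤ 2 * h * f c + h ^ 2 / 2 * (L (c + h) - L (c - h)) := by
  have hcont : ContinuousOn f (Icc (c - h) (c + h)) :=
    fun x hx => (hf x hx).continuousAt.continuousWithinAt
  have hplus : IntervalIntegrable (fun u => f (c + u)) volume 0 h := by
    refine (hcont.comp (by fun_prop) fun u hu => ?_).intervalIntegrable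
    rw [uIcc_of_le hh] at hu
    exact ⟨by linarith [hu.1], by linarith [hu.2]⟩
  have hminus : IntervalIntegrable (fun u => f (c - u)) volume 0 h := by
    refine (hcont.comp (by fun_prop) fun u hu => ?_).intervalIntegrable
    rw [uIcc_of_le hh] at hu
    exact ⟨by linarith [hu.2], by linarith [hu.1]⟩
  have hsplit : ∫ x in (c - h)..(c + h), f x = ∫ u in (0 : ℝ)..h, (f (c + u) + f (c - u)) := by
    rw [intervalIntegral.integral_add hplus hminus, intervalIntegral.integral_comp_add_left,
      intervalIntegral.integral_comp_sub_left, add_zero, sub_zero,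
      add_comm (∫ x in c..c + h, f x), intervalIntegral.integral_add_adjacent_intervals]
    all_goals exact (hcont.mono (uIcc_subset_Icc ⟨by linarith, by linarith⟩
      ⟨by linarith, by linarith⟩)).intervalIntegrable
  calc ∫ x in (c - h)..(c + h), f x
      = ∫ u in (0 : ℝ)..h, (f (c + u) + f (c - u)) := hsplit
    _ ≤ ∫ u in (0 : ℝ)..h, (2 * f c + u * (L (c + h) - L (c - h))) :=
      intervalIntegral.integral_mono_on hh (hplus.add hminus)
        ((continuous_const.add (continuous_id.mul continuous_const)).intervalIntegrable _ _)
        fun u hu => add_symm_le_of_deriv_sub_antitoneOn hf hL hD hu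
    _ = 2 * h * f c + h ^ 2 / 2 * (L (c + h) - L (c - h)) := by
      rw [intervalIntegral.integral_add intervalIntegrable_const
        (intervalIntegral.intervalIntegrable_id.mul_const _), intervalIntegral.integral_const,
        intervalIntegral.integral_mul_const, integral_id, smul_eq_mul]
      ring

noncomputable def sqGauss (a x : ℝ) : ℝ := x ^ 2 * exp (-(a * x) ^ 2)

noncomputable def sqGaussDeriv (a x : ℝ) : ℝ :=
  (2 * x - 2 * a ^ 2 * x ^ 3) * exp (-(a * x) ^ 2)

noncomputable def sqGaussDerivMonoPart (a x : ℝ) : ℝ :=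
  sqGaussDeriv a x - 2 / a * exp (-(a * x) ^ 2)

section sqGauss

variable {a : ℝ}

lemma sqGauss_nonneg (a x : ℝ) : 0 ≤ sqGauss a x := by
  unfold sqGauss; positivity

lemma continuous_sqGauss (a : ℝ) : Continuous (sqGauss a) := by
  unfold sqGauss; fun_prop

lemma hasDerivAt_exp_neg_sq (a x : ℝ) :
    HasDerivAt (fun x => exp (-(a * x) ^ 2)) (-2 * a ^ 2 * x * exp (-(a * x) ^ 2)) x :=
  (((hasDerivAt_id' x).const_mul a).fun_pow 2).fun_neg.exp.congr_deriv (by ring)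

lemma hasDerivAt_sqGauss (a x : ℝ) : HasDerivAt (sqGauss a) (sqGaussDeriv a x) x :=
  ((hasDerivAt_pow 2 x).mul (hasDerivAt_exp_neg_sq a x)).congr_deriv
    (by simp only [sqGaussDeriv]; ring)

lemma hasDerivAt_sqGaussDerivMonoPart (a x : ℝ) :
    HasDerivAt (sqGaussDerivMonoPart a)
      ((a * x - 1) ^ 2 * (4 * (a * x) ^ 2 + 8 * (a * x) + 2) * exp (-(a * x) ^ 2)) x := by
  have hpoly : HasDerivAt (fun x => 2 * x - 2 * a ^ 2 * x ^ 3) (2 - 6 * a ^ 2 * x ^ 2) x :=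
    (((hasDerivAt_id' x).const_mul 2).sub ((hasDerivAt_pow 3 x).const_mul (2 * a ^ 2))).congr_deriv
      (by ring)
  refine ((hpoly.mul (hasDerivAt_exp_neg_sq a x)).sub
    ((hasDerivAt_exp_neg_sq a x).const_mul (2 / a))).congr_deriv ?_
  field_simp
  ring

lemma monotoneOn_sqGaussDerivMonoPart (ha : 0 < a) :
    MonotoneOn (sqGaussDerivMonoPart a) (Ici 0) := by
  refine monotoneOn_of_hasDerivWithinAt_nonneg (convex_Ici 0)
    (fun x _ => (hasDerivAt_sqGaussDerivMonoPart a x).continuousAt.continuousWithinAt)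
    (fun x _ => (hasDerivAt_sqGaussDerivMonoPart a x).hasDerivWithinAt) fun x hx => ?_
  rw [interior_Ici] at hx
  have : 0 ≤ a * x := mul_nonneg ha.le (le_of_lt hx)
  positivity

lemma antitoneOn_sqGaussDeriv_sub_monoPart (ha : 0 < a) :
    AntitoneOn (sqGaussDeriv a - sqGaussDerivMonoPart a) (Ici 0) := by
  intro x hx y _ hxy
  simp only [Pi.sub_apply, sqGaussDerivMonoPart, sub_sub_cancel]
  gcongr
  exact mul_nonneg ha.le hx

lemma sqGaussDerivMonoPart_nonpos (ha : 0 < a) {x : ℝ} (hx : 0 ≤ x) :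
    sqGaussDerivMonoPart a x ≤ 0 := by
  have hy : 0 ≤ a * x := mul_nonneg ha.le hx
  have hpoly : 2 * x - 2 * a ^ 2 * x ^ 3 ≤ 2 / a := by
    rw [le_div_iff₀ ha]
    nlinarith [mul_nonneg hy (sq_nonneg (a * x - 1)), sq_nonneg (a * x - 1), sq_nonneg (a * x)]
  rw [sqGaussDerivMonoPart, sqGaussDeriv, ← sub_mul]
  exact mul_nonpos_of_nonpos_of_nonneg (by linarith) (exp_pos _).le

lemma integral_sqGauss_le_midpoint (ha : 0 < a) {c : ℝ} (hc : 1 / 2 ≤ c) :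
    ∫ x in (c - 1 / 2)..(c + 1 / 2), sqGauss a x ≤
      sqGauss a c +
        (sqGaussDerivMonoPart a (c + 1 / 2) - sqGaussDerivMonoPart a (c - 1 / 2)) / 8 := by
  have hsub : Icc (c - 1 / 2) (c + 1 / 2) ⊆ Ici 0 := fun x hx => by
    simp only [mem_Ici]; linarith [hx.1]
  have := integral_le_midpoint_of_deriv_sub_antitoneOn (by norm_num)
    (fun x _ => hasDerivAt_sqGauss a x) ((monotoneOn_sqGaussDerivMonoPart ha).mono hsub)
    ((antitoneOn_sqGaussDeriv_sub_monoPart ha).mono hsub)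
  linarith

lemma integral_half_sqGauss_le_sum (ha : 0 < a) (N : ℕ) :
    ∫ x in (1 / 2 : ℝ)..(N + 1 / 2), sqGauss a x ≤
      ∑ n ∈ Finset.range N, sqGauss a (n + 1) +
        (sqGaussDerivMonoPart a (N + 1 / 2) - sqGaussDerivMonoPart a (1 / 2)) / 8 := by
  induction N with
  | zero => simp
  | succ N ih =>
    have hcell := integral_sqGauss_le_midpoint ha (c := N + 1)
      (by linarith [N.cast_nonneg (α := ℝ)])
    rw [← intervalIntegral.integral_add_adjacent_intervals (b := N + 1 / 2)
      ((continuous_sqGauss a).intervalIntegrable _ _)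
      ((continuous_sqGauss a).intervalIntegrable _ _), Finset.sum_range_succ]
    push_cast
    rw [show (N : ℝ) + 1 - 1 / 2 = N + 1 / 2 by ring] at hcell
    linarith

lemma summable_sqGauss (ha : 0 < a) : Summable fun n : ℕ => sqGauss a (n + 1) := by
  have hdom : Summable fun n : ℕ => (n : ℝ) ^ 2 * exp (-a ^ 2 * n) :=
    summable_pow_mul_exp_neg_nat_mul 2 (by positivity)
  have hall : Summable fun n : ℕ => sqGauss a n := hdom.of_nonneg_of_le (fun n => ?_) fun n => ?_
  · exact ((summable_nat_add_iff 1).2 hall).congr fun n => by push_cast; rfl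
  · exact sqGauss_nonneg a n
  · unfold sqGauss
    gcongr
    have : (n : ℝ) ≤ n ^ 2 := by exact_mod_cast Nat.le_self_pow two_ne_zero n
    nlinarith [mul_le_mul_of_nonneg_left this (sq_nonneg a)]

lemma sqGauss_eq_rpow (a x : ℝ) : sqGauss a x = x ^ (2 : ℝ) * exp (-a ^ 2 * x ^ (2 : ℝ)) := by
  simp only [sqGauss, rpow_two, neg_mul, mul_pow]

lemma integrableOn_Ioi_sqGauss (ha : 0 < a) : IntegrableOn (sqGauss a) (Ioi 0) := by
  refine (integrableOn_rpow_mul_exp_neg_mul_sq (pow_pos ha 2) (s := 2) (by norm_num)).congr_fun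
    (fun x _ => ?_) measurableSet_Ioi
  simp only [sqGauss_eq_rpow, rpow_two]

lemma integral_Ioi_sqGauss (ha : 0 < a) : ∫ x in Ioi 0, sqGauss a x = √π / (4 * a ^ 3) := by
  simp_rw [sqGauss_eq_rpow]
  rw [integral_rpow_mul_exp_neg_mul_rpow two_pos (by norm_num) (by positivity)]
  have hGamma : Gamma ((2 + 1) / 2) = √π / 2 := by
    rw [show ((2 : ℝ) + 1) / 2 = (0 : ℕ) + 1 + 1 / 2 by norm_num, Gamma_nat_add_one_add_half]
    simp
  have hpow : (a ^ 2) ^ (-(2 + 1) / 2 : ℝ) = (a ^ 3)⁻¹ := by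
    rw [← rpow_natCast, ← rpow_mul ha.le, ← rpow_natCast, ← rpow_neg ha.le]
    norm_num
  rw [hGamma, hpow]
  field_simp
  ring

lemma neg_sqGaussDerivMonoPart_half_le (ha : 0 < a) (ha2 : a ≤ 2) :
    -sqGaussDerivMonoPart a (1 / 2) ≤ 2 / a := by
  have hE : exp (-(a * (1 / 2)) ^ 2) ≤ 1 := exp_le_one_iff.2 (by nlinarith)
  have hslope : 0 ≤ 2 * (1 / 2) - 2 * a ^ 2 * (1 / 2) ^ 3 := by nlinarith
  have : 2 / a * exp (-(a * (1 / 2)) ^ 2) ≤ 2 / a := by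
    simpa using mul_le_mul_of_nonneg_left hE (by positivity : (0 : ℝ) ≤ 2 / a)
  rw [sqGaussDerivMonoPart, sqGaussDeriv]
  nlinarith [mul_nonneg hslope (exp_pos (-(a * (1 / 2)) ^ 2)).le]

lemma integral_Ioi_half_sqGauss_le (ha : 0 < a) (ha2 : a ≤ 2) :
    ∫ x in Ioi (1 / 2), sqGauss a x ≤ ∑' n : ℕ, sqGauss a (n + 1) + 1 / (4 * a) := by
  have hlim : Tendsto (fun N : ℕ => ∫ x in (1 / 2 : ℝ)..(N + 1 / 2), sqGauss a x) atTop
      (𝓝 (∫ x in Ioi (1 / 2), sqGauss a x)) :=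
    intervalIntegral_tendsto_integral_Ioi _
      ((integrableOn_Ioi_sqGauss ha).mono_set (Ioi_subset_Ioi (by norm_num : (0 : ℝ) ≤ 1 / 2)))
      (tendsto_atTop_add_const_right _ _ tendsto_natCast_atTop_atTop)
  refine le_of_tendsto' hlim fun N => (integral_half_sqGauss_le_sum ha N).trans ?_
  have hsum := (summable_sqGauss ha).sum_le_tsum (Finset.range N) fun n _ => sqGauss_nonneg a _
  have hend := sqGaussDerivMonoPart_nonpos ha (x := N + 1 / 2) (by positivity)
  have hstart := neg_sqGaussDerivMonoPart_half_le ha ha2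
  have : 2 / a / 8 = 1 / (4 * a) := by field_simp; norm_num
  linarith

lemma integral_Ioc_sqGauss_le (a : ℝ) : ∫ x in Ioc 0 (1 / 2), sqGauss a x ≤ 1 / 24 := by
  calc ∫ x in Ioc 0 (1 / 2), sqGauss a x
      ≤ ∫ x in Ioc 0 (1 / 2), x ^ 2 := by
        refine setIntegral_mono_on ?_ ?_ measurableSet_Ioc fun x _ => ?_
        · exact (continuous_sqGauss a).integrableOn_Ioc
        · exact (continuous_pow 2).integrableOn_Ioc
        · exact mul_le_of_le_one_right (sq_nonneg x) (exp_le_one_iff.2 (by nlinarith))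
    _ = 1 / 24 := by
        rw [← intervalIntegral.integral_of_le (by norm_num), integral_pow]
        norm_num

lemma integral_Ioi_sqGauss_le_tsum (ha : 0 < a) (ha2 : a ≤ 2) :
    √π / (4 * a ^ 3) ≤ ∑' n : ℕ, sqGauss a (n + 1) + 1 / 24 + 1 / (4 * a) := by
  rw [← integral_Ioi_sqGauss ha, ← Ioc_union_Ioi_eq_Ioi (by norm_num : (0 : ℝ) ≤ 1 / 2),
    setIntegral_union (Ioc_disjoint_Ioi le_rfl) measurableSet_Ioi
      ((integrableOn_Ioi_sqGauss ha).mono_set Ioc_subset_Ioi_self)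
      ((integrableOn_Ioi_sqGauss ha).mono_set (Ioi_subset_Ioi (by norm_num)))]
  linarith [integral_Ioc_sqGauss_le a, integral_Ioi_half_sqGauss_le ha ha2]

theorem mul_exp_le_tsum_sqGauss (ha : 0 < a) :
    √π / (4 * a ^ 3) * exp (-9 * a ^ 2 / 4) ≤ ∑' n : ℕ, sqGauss a (n + 1) := by
  rcases le_total a 1 with ha1 | ha1
  · have hexp : exp (-9 * a ^ 2 / 4) * (1 + 9 * a ^ 2 / 4) ≤ 1 := by
      rw [neg_mul, neg_div, exp_neg, inv_mul_le_iff₀ (exp_pos _), mul_one]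
      linarith [add_one_le_exp (9 * a ^ 2 / 4)]
    have hpi : 1.7 ≤ √π := le_sqrt_of_sq_le (by linarith [pi_gt_three])
    have hcubic : (a / 6 + 1) * (1 + 9 * a ^ 2 / 4) ≤ 91 / 24 := by nlinarith
    have hroom : √π ≤ (√π - a ^ 3 / 6 - a ^ 2) * (1 + 9 * a ^ 2 / 4) := by
      nlinarith [mul_nonneg (sq_nonneg a)
        (by linarith : 0 ≤ 9 / 4 * √π - (a / 6 + 1) * (1 + 9 * a ^ 2 / 4))]
    have hkey : √π * exp (-9 * a ^ 2 / 4) ≤ √π - a ^ 3 / 6 - a ^ 2 := by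
      refine le_of_mul_le_mul_right ?_ (by positivity : (0 : ℝ) < 1 + 9 * a ^ 2 / 4)
      nlinarith [sqrt_nonneg π]
    have hV : √π / (4 * a ^ 3) - 1 / 24 - 1 / (4 * a) =
        (√π - a ^ 3 / 6 - a ^ 2) / (4 * a ^ 3) := by
      field_simp
      ring
    have hmain : √π / (4 * a ^ 3) * exp (-9 * a ^ 2 / 4) ≤
        √π / (4 * a ^ 3) - 1 / 24 - 1 / (4 * a) := by
      rw [hV, div_mul_eq_mul_div]
      gcongr
    linarith [integral_Ioi_sqGauss_le_tsum ha (by linarith)]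
  · have hV : √π / (4 * a ^ 3) ≤ 1 := by
      rw [div_le_one (by positivity)]
      have : √π ≤ 2 := sqrt_le_iff.2 ⟨by norm_num, by linarith [pi_lt_four]⟩
      nlinarith [one_le_pow₀ (n := 3) ha1]
    calc √π / (4 * a ^ 3) * exp (-9 * a ^ 2 / 4)
        ≤ 1 * exp (-a ^ 2) :=
          mul_le_mul hV (exp_le_exp.2 (by nlinarith)) (exp_pos _).le zero_le_one
      _ = sqGauss a ((0 : ℕ) + 1) := by simp [sqGauss]
      _ ≤ ∑' n : ℕ, sqGauss a (n + 1) :=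
          (summable_sqGauss ha).le_tsum 0 fun n _ => sqGauss_nonneg a _

end sqGauss

/-- The series is the eigenfunction expansion of `K_ε(0,0;t)`: only the radial eigenfunctions
`sin(kπ|x|/ε)/(√(2πε)|x|)`, with eigenvalues `(kπ/ε)²`, are nonzero at `0`. -/
theorem stmt17 (ε : ℝ) (hε : 0 < ε) (t : ℝ) (ht : 0 < t) :
    (4 * Real.pi * t) ^ (-(3:ℝ)/2) * Real.exp (-9 * Real.pi^2 * t / (4 * ε^2)) ≤
      ∑' k : ℕ, Real.exp (-(((k:ℝ)+1) * Real.pi / ε)^2 * t) *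
        (((k:ℝ)+1)^2 * Real.pi / (2 * ε^3)) := by
  set a := π * √t / ε
  have ha : 0 < a := by positivity
  have hsq : a ^ 2 = π ^ 2 * t / ε ^ 2 := by rw [div_pow, mul_pow, sq_sqrt ht.le]
  have hterm : ∀ k : ℕ, exp (-(((k : ℝ) + 1) * π / ε) ^ 2 * t) *
      (((k : ℝ) + 1) ^ 2 * π / (2 * ε ^ 3)) = sqGauss a (k + 1) * (π / (2 * ε ^ 3)) := fun k => by
    rw [sqGauss, mul_pow, hsq]
    ring_nf
  have hrpow : (4 * π * t) ^ (-(3 : ℝ) / 2) = √π / (4 * a ^ 3) * (π / (2 * ε ^ 3)) := by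
    rw [rpow_div_two_eq_sqrt _ (by positivity), rpow_neg (sqrt_nonneg _), rpow_ofNat,
      sqrt_mul' _ ht.le, sqrt_mul' _ pi_pos.le, show √4 = 2 by norm_num,
      show a ^ 3 = a * a ^ 2 by ring, hsq]
    simp only [a]
    field_simp
    rw [show √π ^ 4 = (√π ^ 2) ^ 2 by ring, sq_sqrt pi_pos.le, sq_sqrt ht.le]
    ring
  have hexp : exp (-9 * π ^ 2 * t / (4 * ε ^ 2)) = exp (-9 * a ^ 2 / 4) := by
    rw [hsq]; ring_nf
  rw [tsum_congr hterm, tsum_mul_right, hrpow, hexp, mul_right_comm]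
  exact mul_le_mul_of_nonneg_right (mul_exp_le_tsum_sqGauss ha) (by positivity)
end
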